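/- Suppose the nondegeneracy assumption holds and that ∫ ‖P_n^X(z,·) − π(·×F)‖_TV π(dz×F) → 0 as n→∞. Then the invariant measure has equivalent product structure: there exists a strictly positive measurable function h : E×F → (0,∞) such that π(dz,dw) = h(z,w) π(dz×F) π(E×dw). -/

import Mathlib

open MeasureTheory ProbabilityTheory Filter Set
open scoped ENNReal

noncomputable section

/-- The total variation distance between two (finite) measures. -/
def tvDist {α : Type*} [MeasurableSpace α] (μ ν : Measure α) : ℝ :=
  ⨆ A : { s : Set α // MeasurableSet s }, |(μ A.1).toReal - (ν A.1).toReal|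

/-- The product of two measures, written via `bind` so that no side conditions are needed. -/
def measProd {α β : Type*} [MeasurableSpace α] [MeasurableSpace β]
    (μ : Measure α) (ν : Measure β) : Measure (α × β) :=
  μ.bind fun a => ν.map (Prod.mk a)

/-- Iterates of a Markov transition kernel. -/
def kpow {α : Type*} [MeasurableSpace α] (κ : Kernel α α) : ℕ → Kernel α α
  | 0 => Kernel.id
  | n + 1 => (kpow κ n) ∘ₖ κ

/-- The canonical two-sided path space of the bivariate chain. -/
abbrev PathSp (E F : Type*) := (ℤ → E) × (ℤ → F)

section Setup

variable {E F : Type*} [MeasurableSpace E] [MeasurableSpace F]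

/-- The unobserved coordinate process. -/
def Xp (n : ℤ) (ω : PathSp E F) : E := ω.1 n

/-- The observed coordinate process. -/
def Yp (n : ℤ) (ω : PathSp E F) : F := ω.2 n

/-- The joint coordinate process. -/
def XYp (n : ℤ) (ω : PathSp E F) : E × F := (ω.1 n, ω.2 n)

/-- The canonical shift on path space. -/
def pathShift (ω : PathSp E F) : PathSp E F := (fun n => ω.1 (n + 1), fun n => ω.2 (n + 1))

/-- The shift on the observation path space. -/
def shiftObs (n : ℤ) (y : ℤ → F) : ℤ → F := fun k => y (k + n)

/-- `𝓕X I = σ{X_k : k ∈ I}`. -/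
def sigX (I : Set ℤ) : MeasurableSpace (PathSp E F) :=
  ⨆ k ∈ I, MeasurableSpace.comap (fun ω : PathSp E F => ω.1 k) inferInstance

/-- `𝓕Y I = σ{Y_k : k ∈ I}`. -/
def sigY (I : Set ℤ) : MeasurableSpace (PathSp E F) :=
  ⨆ k ∈ I, MeasurableSpace.comap (fun ω : PathSp E F => ω.2 k) inferInstance

/-- `σ{Y_k : k ≥ 0}` on the observation path space `F^ℤ`. -/
def sigObsPlus (F : Type*) [MeasurableSpace F] : MeasurableSpace (ℤ → F) :=
  ⨆ k ∈ Ici (0 : ℤ), MeasurableSpace.comap (fun y : ℤ → F => y k) inferInstance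

/-- Two-sided Markov property of a path-space law with one-step kernel `P`. -/
def TwoSidedMarkov (Plaw : Measure (PathSp E F)) (P : Kernel (E × F) (E × F)) : Prop :=
  ∀ (n : ℤ) (A : Set (E × F)), MeasurableSet A →
    ∀ S : Set (PathSp E F), MeasurableSet[sigX (Iic n) ⊔ sigY (Iic n)] S →
      Plaw (S ∩ XYp (n + 1) ⁻¹' A) = ∫⁻ ω in S, P (XYp n ω) A ∂Plaw

/-- Markov property of the forward chain `(X_n,Y_n)_{n ≥ m₀}`. -/
def FwdMarkovFrom (m₀ : ℤ) (μ : Measure (PathSp E F)) (P : Kernel (E × F) (E × F)) : Prop :=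
  ∀ n : ℤ, m₀ ≤ n → ∀ A : Set (E × F), MeasurableSet A →
    ∀ S : Set (PathSp E F), MeasurableSet[sigX (Icc m₀ n) ⊔ sigY (Icc m₀ n)] S →
      μ (S ∩ XYp (n + 1) ⁻¹' A) = ∫⁻ ω in S, P (XYp n ω) A ∂μ

/-- Markov property of the backward chain `(X_{-n},Y_{-n})_{n ≥ -m₀}` with kernel `P'`. -/
def BwdMarkovFrom (m₀ : ℤ) (μ : Measure (PathSp E F)) (P' : Kernel (E × F) (E × F)) : Prop :=
  ∀ n : ℤ, n ≤ m₀ → ∀ A : Set (E × F), MeasurableSet A →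
    ∀ S : Set (PathSp E F), MeasurableSet[sigX (Icc n m₀) ⊔ sigY (Icc n m₀)] S →
      μ (S ∩ XYp (n - 1) ⁻¹' A) = ∫⁻ ω in S, P' (XYp n ω) A ∂μ

/-- The canonical setup of the paper: `Plaw` is the law of the two-sided stationary Markov chain
`(X_n,Y_n)_{n∈ℤ}` with transition kernel `P` and stationary distribution `π`; `P'` is a version
of the reversed transition kernel; and `K (z,w) = Plaw^{z,w}` is the regular conditional
probability `Plaw( · | X_0 = z, Y_0 = w)`, under which the forward chain is Markov with kernel `P`
started at `(z,w)`, the backward chain is Markov with kernel `P'` started at `(z,w)`, and the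
forward and backward chains are independent. -/
structure CanonicalSetup (P P' : Kernel (E × F) (E × F)) (π : Measure (E × F))
    (Plaw : Measure (PathSp E F)) (K : Kernel (E × F) (PathSp E F)) : Prop where
  prob : IsProbabilityMeasure Plaw
  stationary : Plaw.map pathShift = Plaw
  marginal : Plaw.map (XYp 0) = π
  markov : TwoSidedMarkov Plaw P
  rev : ∀ A B : Set (E × F), MeasurableSet A → MeasurableSet B →
    ∫⁻ p in B, P' p A ∂π = ∫⁻ p in A, P p B ∂π
  disint : π.bind (fun p => K p) = Plaw
  start : ∀ p : E × F, K p {ω | XYp 0 ω = p} = 1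
  fwd : ∀ p : E × F, FwdMarkovFrom 0 (K p) P
  bwd : ∀ p : E × F, BwdMarkovFrom 0 (K p) P'
  indep : ∀ p : E × F,
    ProbabilityTheory.Indep (sigX (Ici 0) ⊔ sigY (Ici 0)) (sigX (Iic 0) ⊔ sigY (Iic 0)) (K p)

/-- Assumption (nondegeneracy): `P(z,w,dz',dw') = g(z,w,z',w') P₀(z,dz') Q(w,dw')` for a
strictly positive finite measurable density `g`. -/
structure Nondeg (P : Kernel (E × F) (E × F)) (P₀ : Kernel E E) (Q : Kernel F F)
    (g : E → F → E → F → ℝ≥0∞) : Prop where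
  markovP₀ : IsMarkovKernel P₀
  markovQ : IsMarkovKernel Q
  meas : Measurable fun q : (E × F) × E × F => g q.1.1 q.1.2 q.2.1 q.2.2
  pos : ∀ z w z' w', 0 < g z w z' w'
  fin : ∀ z w z' w', g z w z' w' < ⊤
  eq : ∀ p : E × F, P p = (measProd (P₀ p.1) (Q p.2)).withDensity fun q => g p.1 p.2 q.1 q.2

/-- Assumption (marginal ergodicity):
`∫ ‖Plaw^{z,w}(X_n ∈ ·) − Plaw(X_n ∈ ·)‖_TV π(dz,dw) → 0`. -/
def MarginalErgodic (π : Measure (E × F)) (Plaw : Measure (PathSp E F))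
    (K : Kernel (E × F) (PathSp E F)) : Prop :=
  Tendsto (fun n : ℕ =>
      ∫ p, tvDist ((K p).map (Xp (n : ℤ))) (Plaw.map (Xp (n : ℤ))) ∂π) atTop (nhds 0)

/-- Assumption (reversed marginal ergodicity):
`∫ ‖Plaw^{z,w}(X_{-n} ∈ ·) − Plaw(X_{-n} ∈ ·)‖_TV π(dz,dw) → 0`. -/
def RevMarginalErgodic (π : Measure (E × F)) (Plaw : Measure (PathSp E F))
    (K : Kernel (E × F) (PathSp E F)) : Prop :=
  Tendsto (fun n : ℕ =>
      ∫ p, tvDist ((K p).map (Xp (-(n : ℤ)))) (Plaw.map (Xp (-(n : ℤ)))) ∂π) atTop (nhds 0)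

/-- `m₁ = m₂` modulo `Plaw`-null sets (one inclusion: every `m₁`-set differs from an `m₂`-set by a
`Plaw`-null set). -/
def EqModNull (Plaw : Measure (PathSp E F)) (m₁ m₂ : MeasurableSpace (PathSp E F)) : Prop :=
  ∀ A : Set (PathSp E F), MeasurableSet[m₁] A →
    ∃ B : Set (PathSp E F), MeasurableSet[m₂] B ∧ Plaw ((A \ B) ∪ (B \ A)) = 0

end Setup

section More

variable {E F : Type*} [MeasurableSpace E] [MeasurableSpace F]

/-- `Pi` is a version of the nonlinear filter for the path-space law `mu`:
`Pi n` is a version of the regular conditional probability `mu(X_n ∈ · | Y_0,…,Y_n)`. -/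
def IsFilterOf (mu : Measure (PathSp E F)) (Pi : ℕ → PathSp E F → Measure E) : Prop :=
  ∀ n : ℕ,
    (∀ ω, IsProbabilityMeasure (Pi n ω)) ∧
    ∀ A : Set E, MeasurableSet A →
      Measurable[sigY (Icc 0 (n : ℤ))] (fun ω => Pi n ω A) ∧
      ∀ S : Set (PathSp E F), MeasurableSet[sigY (Icc 0 (n : ℤ))] S →
        ∫⁻ ω in S, Pi n ω A ∂mu = mu (S ∩ Xp (n : ℤ) ⁻¹' A)

/-- `κ` is a version of the regular conditional distribution of `X_n` given `Y_0`
under the path-space law `mu`. -/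
def IsCondLawX0 (mu : Measure (PathSp E F)) (n : ℕ) (κ : F → Measure E) : Prop :=
  (∀ w, IsProbabilityMeasure (κ w)) ∧
  ∀ A : Set E, MeasurableSet A →
    Measurable (fun w => κ w A) ∧
    ∀ B : Set F, MeasurableSet B →
      ∫⁻ w in B, κ w A ∂(mu.map (Yp 0)) = mu (Yp 0 ⁻¹' B ∩ Xp (n : ℤ) ⁻¹' A)

/-- `πX` is a version of the regular conditional probability `𝐏(Y_0 ∈ · | X_0)`,
equivalently a disintegration of `π` over its first marginal. -/
def IsCondYgivenX (π : Measure (E × F)) (πX : E → Measure F) : Prop :=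
  (∀ z, IsProbabilityMeasure (πX z)) ∧
  ∀ B : Set F, MeasurableSet B →
    Measurable (fun z => πX z B) ∧
    ∀ A : Set E, MeasurableSet A →
      ∫⁻ z in A, πX z B ∂(π.map Prod.fst) = π (A ×ˢ B)

/-- `πY` is a version of the regular conditional probability `𝐏(X_0 ∈ · | Y_0)`,
equivalently a disintegration of `π` over its second marginal. -/
def IsCondXgivenY (π : Measure (E × F)) (πY : F → Measure E) : Prop :=
  (∀ w, IsProbabilityMeasure (πY w)) ∧
  ∀ A : Set E, MeasurableSet A →
    Measurable (fun w => πY w A) ∧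
    ∀ B : Set F, MeasurableSet B →
      ∫⁻ w in B, πY w A ∂(π.map Prod.snd) = π (A ×ˢ B)

/-- `P_n^X(z,A) = ∫ P^n(z,w,A×F) π^X(z,dw)`, as a measure on `E`. -/
def PnX (P : Kernel (E × F) (E × F)) (πX : E → Measure F) (n : ℕ) (z : E) : Measure E :=
  ((πX z).bind fun w => (kpow P n) (z, w)).map Prod.fst

/-- `P_n^Y(w,B) = ∫ P^n(z,w,E×B) π^Y(w,dz)`, as a measure on `F`. -/
def PnY (P : Kernel (E × F) (E × F)) (πY : F → Measure E) (n : ℕ) (w : F) : Measure F :=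
  ((πY w).bind fun z => (kpow P n) (z, w)).map Prod.snd

/-- The one-step filter update
`U(ν,y₀,y₁)(A) = ∫ 1_A(z) g(z',y₀,z,y₁) P₀(z',dz) ν(dz') / (normalization)`. -/
def Ufilt (P₀ : Kernel E E) (g : E → F → E → F → ℝ≥0∞)
    (ν : Measure E) (y₀ y₁ : F) : Measure E :=
  let m : Measure E := ν.bind fun z' => (P₀ z').withDensity fun z => g z' y₀ z y₁
  (m Set.univ)⁻¹ • m

/-- The transition kernel `Γ` of the pair `(Π_n, Y_n)`:
`Γ(ν,y₀,A) = ∫∫ 1_A(U(ν,y₀,y₁),y₁) P(z,y₀,dz',dy₁) ν(dz)` (as a set function). -/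
def GammaFn (P : Kernel (E × F) (E × F)) (P₀ : Kernel E E) (g : E → F → E → F → ℝ≥0∞)
    (ν : Measure E) (y₀ : F) (A : Set (Measure E × F)) : ℝ≥0∞ :=
  ∫⁻ z, ∫⁻ q : E × F, A.indicator 1 (Ufilt P₀ g ν y₀ q.2, q.2) ∂(P (z, y₀)) ∂ν

/-- `m` is a `Γ`-invariant measure. -/
def GammaInvariant (P : Kernel (E × F) (E × F)) (P₀ : Kernel E E)
    (g : E → F → E → F → ℝ≥0∞) (m : Measure (Measure E × F)) : Prop :=
  ∀ A : Set (Measure E × F), MeasurableSet A →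
    ∫⁻ p, GammaFn P P₀ g p.1 p.2 A ∂m = m A

/-- `μ` is the barycenter of `m`: `μ(A×B) = ∫ ν(A) 1_B(w) m(dν,dw)`. -/
def HasBarycenter (m : Measure (Measure E × F)) (μ : Measure (E × F)) : Prop :=
  ∀ A : Set E, ∀ B : Set F, MeasurableSet A → MeasurableSet B →
    ∫⁻ p, p.1 A * B.indicator 1 p.2 ∂m = μ (A ×ˢ B)

/-- The transition kernel `Λ` of the triple `(Π_n, X_n, Y_n)`:
`Λ(ν,x₀,y₀,A) = ∫ 1_A(U(ν,y₀,y₁),x₁,y₁) P(x₀,y₀,dx₁,dy₁)` (as a set function). -/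
def LambdaFn (P : Kernel (E × F) (E × F)) (P₀ : Kernel E E) (g : E → F → E → F → ℝ≥0∞)
    (ν : Measure E) (x₀ : E) (y₀ : F) (A : Set (Measure E × E × F)) : ℝ≥0∞ :=
  ∫⁻ q : E × F, A.indicator 1 (Ufilt P₀ g ν y₀ q.2, q.1, q.2) ∂(P (x₀, y₀))

/-- `M` is a `Λ`-invariant measure. -/
def LambdaInvariant (P : Kernel (E × F) (E × F)) (P₀ : Kernel E E)
    (g : E → F → E → F → ℝ≥0∞) (M : Measure (Measure E × E × F)) : Prop :=
  ∀ A : Set (Measure E × E × F), MeasurableSet A →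
    ∫⁻ p, LambdaFn P P₀ g p.1 p.2.1 p.2.2 A ∂M = M A

/-- `M` has marginal `π` on `E × F`. -/
def HasMarginalPi (M : Measure (Measure E × E × F)) (π : Measure (E × F)) : Prop :=
  ∀ B : Set (E × F), MeasurableSet B →
    M ((fun p : Measure E × E × F => (p.2.1, p.2.2)) ⁻¹' B) = π B

/-- The class `𝔐` of measures `M` on `𝒫(E)×E×F` such that
`M(A×B×C) = ∫ ν(B) 1_{A×C}(ν,w) M(dν,dz,dw)`. -/
def InClassM (M : Measure (Measure E × E × F)) : Prop :=
  ∀ A : Set (Measure E), ∀ B : Set E, ∀ C : Set F,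
    MeasurableSet A → MeasurableSet B → MeasurableSet C →
      M (A ×ˢ B ×ˢ C) = ∫⁻ p, p.1 B * (A ×ˢ C).indicator 1 (p.1, p.2.2) ∂M

/-- `ϖ` is a version of the regular conditional probability `𝐏(X_0 ∈ · | F^Y)`. -/
def IsCondX0FullObs (Plaw : Measure (PathSp E F)) (ϖ : (ℤ → F) → Measure E) : Prop :=
  (∀ y, IsProbabilityMeasure (ϖ y)) ∧
  ∀ A : Set E, MeasurableSet A →
    Measurable (fun y => ϖ y A) ∧
    ∀ B : Set (ℤ → F), MeasurableSet B →
      ∫⁻ y in B, ϖ y A ∂(Plaw.map Prod.snd) = Plaw (Xp 0 ⁻¹' A ∩ Prod.snd ⁻¹' B)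

/-- `ϖ⁺` is a version of the regular conditional probability `𝐏(X_0 ∈ · | F^Y_+)`. -/
def IsCondX0FutureObs (Plaw : Measure (PathSp E F)) (ϖp : (ℤ → F) → Measure E) : Prop :=
  (∀ y, IsProbabilityMeasure (ϖp y)) ∧
  ∀ A : Set E, MeasurableSet A →
    Measurable[sigObsPlus F] (fun y => ϖp y A) ∧
    ∀ B : Set (ℤ → F), MeasurableSet[sigObsPlus F] B →
      ∫⁻ y in B, ϖp y A ∂(Plaw.map Prod.snd) = Plaw (Xp 0 ⁻¹' A ∩ Prod.snd ⁻¹' B)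

/-- `PX` is a version of the conditional transition kernel
`𝐏(X_{n+1} ∈ · | F^X_{≤ n} ∨ F^Y)(ω) = P^X(X_n(ω), Θ^n Y(ω), ·)` of the unobserved
process given the observations (a Markov chain in a random environment). -/
def IsCondKernelPX (Plaw : Measure (PathSp E F)) (PX : E → (ℤ → F) → Measure E) : Prop :=
  (∀ z y, IsProbabilityMeasure (PX z y)) ∧
  Measurable (fun q : E × (ℤ → F) => PX q.1 q.2) ∧
  ∀ (n : ℤ) (A : Set E), MeasurableSet A →
    ∀ S : Set (PathSp E F), MeasurableSet[sigX (Iic n) ⊔ sigY Set.univ] S →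
      ∫⁻ ω in S, PX (Xp n ω) (shiftObs n ω.2) A ∂Plaw = Plaw (S ∩ Xp (n + 1) ⁻¹' A)

/-- The time-`n` law of the conditional (random-environment) chain `𝐏_{z,y}(X_n ∈ ·)`
started at `z` in the environment `y`. -/
def condChainLaw (PX : E → (ℤ → F) → Measure E) : ℕ → E → (ℤ → F) → Measure E
  | 0, z, _ => Measure.dirac z
  | n + 1, z, y => (condChainLaw PX n z y).bind fun x => PX x (shiftObs (n : ℤ) y)

end More

/-!
Write `m`, `ν` for the marginals of `π` and `ρ = m ⊗ ν`. By nondegeneracy, `Pⁿ((z, w), ·)` has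
the same null sets as `P₀ⁿ(z, ·) ⊗ Qⁿ(w, ·)`; with the invariance of `π` this makes `m`
quasi-invariant under `P₀ⁿ`, `ν` under `Qⁿ`, and hence `ρ` under `Pⁿ`. Moreover
`P_n^X(z, ·) ≪ P₀ⁿ(z, ·)`, and `P_n^X(z, ·) → m` in total variation, in `m`-measure.

* `ρ ≪ π`: if `π C = 0` then `Pⁿ(q, C) = 0` for `π`-a.e. `q`, so `Qⁿ(w, ·)`-almost every section
  `C^b` is `P₀ⁿ(z, ·)`-null, hence `P_n^X(z, ·)`-null, hence `m`-small unless `z` lies in a set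
  of small `m`-measure. This bounds `ν {b | m (C^b) ≥ ε}` by quantities tending to `0`.
* `π ≪ ρ`: the singular part `σ` of `π` lives on a `ρ`-null set `N`, and quasi-invariance of `ρ`
  forces `Pⁿ(q, N) = 1` for `σ`-a.e. `q`. Then `P_n^X(z, ·)` is carried by a set that `m` does not
  charge, so `‖P_n^X(z, ·) - m‖_TV ≥ 1` on a set of `m`-measure at least `σ (E × F)`.

The Radon–Nikodym derivative of `π` with respect to `ρ`, modified on a null set, is the density.
-/

lemma measProd_eq_prod {α β : Type*} [MeasurableSpace α] [MeasurableSpace β]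
    (μ : Measure α) (ν : Measure β) [SFinite ν] : measProd μ ν = μ.prod ν := by
  ext s hs
  rw [measProd, Measure.bind_apply hs (Measure.measurable_of_measurable_coe _ fun t ht => by
      simpa [Measure.map_apply measurable_prodMk_left ht] using
        measurable_measure_prodMk_left ht).aemeasurable, Measure.prod_apply hs]
  simp_rw [Measure.map_apply measurable_prodMk_left hs]

section TotalVariation

open scoped symmDiff

variable {α : Type*} [MeasurableSpace α]

lemma tvDist_nonneg (μ ν : Measure α) : 0 ≤ tvDist μ ν :=
  Real.iSup_nonneg fun _ => abs_nonneg _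

lemma abs_sub_le_tvDist (μ ν : Measure α) [IsFiniteMeasure μ] [IsFiniteMeasure ν] {s : Set α}
    (hs : MeasurableSet s) : |(μ s).toReal - (ν s).toReal| ≤ tvDist μ ν := by
  refine le_ciSup (f := fun t : {t : Set α // MeasurableSet t} => |(μ t).toReal - (ν t).toReal|)
    ⟨(μ univ).toReal + (ν univ).toReal, ?_⟩ ⟨s, hs⟩
  rintro _ ⟨t, rfl⟩
  refine (abs_sub _ _).trans ?_
  simp only [ENNReal.abs_toReal]
  gcongr <;> simp

lemma tvDist_le_one (μ ν : Measure α) [IsProbabilityMeasure μ] [IsProbabilityMeasure ν] :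
    tvDist μ ν ≤ 1 := by
  refine Real.iSup_le (fun t => abs_sub_le_iff.2 ⟨?_, ?_⟩) zero_le_one <;>
  linarith [measureReal_le_one (μ := μ) (s := t.1), measureReal_le_one (μ := ν) (s := t.1),
    measureReal_nonneg (μ := μ) (s := t.1), measureReal_nonneg (μ := ν) (s := t.1),
    measureReal_def μ t.1, measureReal_def ν t.1]

lemma tvDist_eq_iSup_of_isSetAlgebra {𝒜 : Set (Set α)} (h𝒜 : IsSetAlgebra 𝒜)
    (hgen : ‹MeasurableSpace α› = MeasurableSpace.generateFrom 𝒜) (μ ν : Measure α)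
    [IsFiniteMeasure μ] [IsFiniteMeasure ν] :
    tvDist μ ν = ⨆ t : 𝒜, |(μ t).toReal - (ν t).toReal| := by
  have hmeas : ∀ t ∈ 𝒜, MeasurableSet t := fun t ht =>
    hgen ▸ MeasurableSpace.measurableSet_generateFrom ht
  have : Nonempty 𝒜 := ⟨⟨∅, h𝒜.empty_mem⟩⟩
  have hbdd : BddAbove (range fun t : 𝒜 => |(μ t).toReal - (ν t).toReal|) :=
    ⟨tvDist μ ν, by rintro _ ⟨t, rfl⟩; exact abs_sub_le_tvDist μ ν (hmeas t t.2)⟩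
  refine le_antisymm (ciSup_le fun ⟨s, hs⟩ => le_of_forall_pos_le_add fun ε hε => ?_)
    (ciSup_le fun t => abs_sub_le_tvDist μ ν (hmeas t t.2))
  -- approximating `s` by `t ∈ 𝒜` up to `ε` in `μ + ν` changes `|μ s - ν s|` by at most `ε`
  obtain ⟨t, ht, hst⟩ := (Measure.MeasureDense.of_generateFrom_isSetAlgebra_finite (μ + ν) h𝒜
    hgen).approx s hs (measure_ne_top _ _) ε hε
  have hμ := abs_measureReal_sub_le_measureReal_symmDiff (μ := μ) hs.nullMeasurableSet
    (hmeas t ht).nullMeasurableSet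
  have hν := abs_measureReal_sub_le_measureReal_symmDiff (μ := ν) hs.nullMeasurableSet
    (hmeas t ht).nullMeasurableSet
  have hε' : μ.real (s ∆ t) + ν.real (s ∆ t) ≤ ε := by
    rw [← measureReal_add_apply]
    exact ENNReal.toReal_le_of_le_ofReal hε.le hst.le
  have ht_le := le_ciSup hbdd ⟨t, ht⟩
  simp only [measureReal_def] at hμ hν hε' ⊢
  rw [abs_le] at hμ hν ⊢
  have := abs_le.mp (le_refl |(μ t).toReal - (ν t).toReal|)
  constructor <;> linarith

lemma measurable_tvDist [MeasurableSpace.CountablyGenerated α] {β : Type*} [MeasurableSpace β]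
    {μ : β → Measure α} [∀ b, IsFiniteMeasure (μ b)]
    (hμ : ∀ s, MeasurableSet s → Measurable fun b => μ b s) (ν : Measure α) [IsFiniteMeasure ν] :
    Measurable fun b => tvDist (μ b) ν := by
  obtain ⟨𝒜, h𝒜c, h𝒜, hgen⟩ : ∃ 𝒜 : Set (Set α), 𝒜.Countable ∧ IsSetAlgebra 𝒜 ∧
      ‹MeasurableSpace α› = MeasurableSpace.generateFrom 𝒜 :=
    ⟨_, countable_generateSetAlgebra MeasurableSpace.countable_countableGeneratingSet,
      isSetAlgebra_generateSetAlgebra, by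
        rw [generateFrom_generateSetAlgebra_eq,
          MeasurableSpace.generateFrom_countableGeneratingSet]⟩
  have := h𝒜c.to_subtype
  simp_rw [tvDist_eq_iSup_of_isSetAlgebra h𝒜 hgen]
  refine Measurable.iSup fun t => ((hμ t ?_).ennreal_toReal.sub measurable_const).abs
  exact hgen ▸ MeasurableSpace.measurableSet_generateFrom t.2

end TotalVariation

namespace MeasureTheory

variable {α β : Type*} [MeasurableSpace α] [MeasurableSpace β]

lemma Measure.parallelComp_comp_prod {γ δ : Type*} [MeasurableSpace γ] [MeasurableSpace δ]
    {μ : Measure α} {ν : Measure β} [SFinite μ] [SFinite ν] {κ : Kernel α γ} {η : Kernel β δ}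
    [IsSFiniteKernel κ] [IsSFiniteKernel η] :
    (κ ∥ₖ η) ∘ₘ (μ.prod ν) = (κ ∘ₘ μ).prod (η ∘ₘ ν) := by
  rw [Measure.prod_comp_right, Measure.prod_comp_left, Measure.comp_assoc,
    Kernel.parallelComp_comp_parallelComp, Kernel.id_comp, Kernel.comp_id]

lemma Measure.ae_apply_eq_zero_of_comp_apply_eq_zero {μ : Measure α} {κ : Kernel α β}
    {s : Set β} (hs : MeasurableSet s) (h : (κ ∘ₘ μ) s = 0) : ∀ᵐ a ∂μ, κ a s = 0 := by
  rwa [Measure.bind_apply hs κ.aemeasurable, lintegral_eq_zero_iff (κ.measurable_coe hs)] at h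

lemma measure_le_measure_setOf_apply_ne_zero {μ : Measure α} {κ : Kernel α α} [IsMarkovKernel κ]
    (hμ : κ ∘ₘ μ = μ) {s : Set α} (hs : MeasurableSet s) : μ s ≤ μ {a | κ a s ≠ 0} := by
  conv_lhs => rw [← hμ, Measure.bind_apply hs κ.aemeasurable]
  exact lintegral_le_meas (fun _ => prob_le_one) fun a ha => not_ne_iff.mp ha

lemma Measure.ae_singularPart_kernel_apply_compl_eq_zero {μ ρ : Measure α} [IsFiniteMeasure μ]
    [SigmaFinite ρ] {κ : Kernel α α} [IsMarkovKernel κ] (hμ : κ ∘ₘ μ = μ) (hρ : κ ∘ₘ ρ ≪ ρ)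
    {N : Set α} (hN : MeasurableSet N) (hρN : ρ N = 0) (hσN : μ.singularPart ρ Nᶜ = 0) :
    ∀ᵐ a ∂(μ.singularPart ρ), κ a Nᶜ = 0 := by
  have hac : ρ.withDensity (μ.rnDeriv ρ) ≪ ρ := withDensity_absolutelyContinuous ρ _
  -- `κ` cannot move the absolutely continuous part of `μ` into `N`, so `σ` alone fills `N`
  have hσ : (κ ∘ₘ μ.singularPart ρ) N = μ.singularPart ρ univ := by
    have h := congrArg (· N) hμ
    rw [μ.haveLebesgueDecomposition_add ρ, Measure.comp_add, Measure.add_apply, Measure.add_apply,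
      (hac.comp_right κ).trans hρ hρN, hac hρN, add_zero, add_zero] at h
    rw [h, ← measure_add_measure_compl hN, hσN, add_zero]
  refine Measure.ae_apply_eq_zero_of_comp_apply_eq_zero hN.compl ?_
  rw [measure_compl hN (measure_ne_top _ _), hσ, Measure.bind_apply .univ κ.aemeasurable]
  simp

lemma Measure.exists_pos_lt_top_withDensity_eq {μ ν : Measure α} [SigmaFinite μ] [SigmaFinite ν]
    (hμν : μ ≪ ν) (hνμ : ν ≪ μ) :
    ∃ h : α → ℝ≥0∞, Measurable h ∧ (∀ x, 0 < h x ∧ h x < ⊤) ∧ μ = ν.withDensity h := by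
  set r := μ.rnDeriv ν
  have hr : Measurable r := Measure.measurable_rnDeriv μ ν
  have hgood : MeasurableSet {x | 0 < r x ∧ r x < ⊤} :=
    (measurableSet_lt measurable_const hr).inter (measurableSet_lt hr measurable_const)
  refine ⟨fun x => if 0 < r x ∧ r x < ⊤ then r x else 1, hr.ite hgood measurable_const,
    fun x => ?_, ?_⟩
  · dsimp only
    split_ifs with hx
    exacts [hx, ⟨one_pos, ENNReal.one_lt_top⟩]
  · conv_lhs => rw [← Measure.withDensity_rnDeriv_eq μ ν hμν]
    refine withDensity_congr_ae ?_
    filter_upwards [Measure.rnDeriv_pos' hνμ, Measure.rnDeriv_lt_top μ ν] with x h0 htop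
    simp [r, h0, htop]

lemma TendstoInMeasure.of_tendsto_integral {ι : Type*} {μ : Measure α} {l : Filter ι}
    {f : ι → α → ℝ} (hf : ∀ i, 0 ≤ᵐ[μ] f i) (hfi : ∀ i, Integrable (f i) μ)
    (h : Tendsto (fun i => ∫ x, f i x ∂μ) l (nhds 0)) : TendstoInMeasure μ f l 0 := by
  refine tendstoInMeasure_of_tendsto_eLpNorm one_ne_zero (fun i => (hfi i).aestronglyMeasurable)
    aestronglyMeasurable_const ?_
  have hnorm : ∀ i, eLpNorm (f i - 0) 1 μ = ENNReal.ofReal (∫ x, f i x ∂μ) := fun i => by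
    rw [sub_zero, eLpNorm_one_eq_lintegral_enorm,
      ofReal_integral_eq_lintegral_ofReal (hfi i) (hf i)]
    refine lintegral_congr_ae ?_
    filter_upwards [hf i] with x hx
    exact Real.enorm_of_nonneg hx
  simp_rw [hnorm]
  simpa using ENNReal.tendsto_ofReal h

lemma TendstoInMeasure.tendsto_measure_le {ι : Type*} {μ : Measure α} {l : Filter ι}
    {f : ι → α → ℝ} (h : TendstoInMeasure μ f l 0) (hf : ∀ i x, 0 ≤ f i x) {ε : ℝ} (hε : 0 < ε) :
    Tendsto (fun i => μ {x | ε ≤ f i x}) l (nhds 0) := by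
  simpa [abs_of_nonneg (hf _ _)] using tendstoInMeasure_iff_dist.mp h ε hε

end MeasureTheory

section Kpow

variable {α β : Type*} [MeasurableSpace α] [MeasurableSpace β]

instance isMarkovKernel_kpow (κ : Kernel α α) [IsMarkovKernel κ] (n : ℕ) :
    IsMarkovKernel (kpow κ n) := by
  induction n with
  | zero => rw [kpow]; infer_instance
  | succ n ih => rw [kpow]; infer_instance

lemma kpow_succ_apply (κ : Kernel α α) (n : ℕ) (a : α) : kpow κ (n + 1) a = kpow κ n ∘ₘ κ a :=
  Kernel.comp_apply _ _ _

lemma kpow_comp_eq_self {μ : Measure α} {κ : Kernel α α} (hμ : κ ∘ₘ μ = μ) (n : ℕ) :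
    kpow κ n ∘ₘ μ = μ := by
  induction n with
  | zero => exact Measure.id_comp
  | succ n ih => rw [kpow, ← Measure.comp_assoc, hμ, ih]

lemma kpow_parallelComp (κ : Kernel α α) (η : Kernel β β) [IsMarkovKernel κ] [IsMarkovKernel η]
    (n : ℕ) : kpow (κ ∥ₖ η) n = kpow κ n ∥ₖ kpow η n := by
  induction n with
  | zero => exact Kernel.id_parallelComp_id.symm
  | succ n ih => rw [kpow, ih, Kernel.parallelComp_comp_parallelComp]; rfl

lemma kpow_absolutelyContinuous {κ η : Kernel α α} (h : ∀ a, κ a ≪ η a) (n : ℕ) (a : α) :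
    kpow κ n a ≪ kpow η n a := by
  induction n generalizing a with
  | zero => exact Measure.AbsolutelyContinuous.rfl
  | succ n ih =>
    rw [kpow_succ_apply, kpow_succ_apply]
    exact (h a).comp (ae_of_all _ ih)

end Kpow

namespace Nondeg

variable {E F : Type*} [MeasurableSpace E] [MeasurableSpace F] {P : Kernel (E × F) (E × F)}
  {P₀ : Kernel E E} {Q : Kernel F F} {g : E → F → E → F → ℝ≥0∞}

lemma apply_eq_withDensity (hnd : Nondeg P P₀ Q g) (p : E × F) :
    P p = ((P₀ ∥ₖ Q) p).withDensity fun q => g p.1 p.2 q.1 q.2 := by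
  have := hnd.markovP₀; have := hnd.markovQ
  rw [hnd.eq, measProd_eq_prod, Kernel.parallelComp_apply]

lemma kpow_absolutelyContinuous_parallelComp (hnd : Nondeg P P₀ Q g) (n : ℕ) (p : E × F) :
    kpow P n p ≪ (kpow P₀ n ∥ₖ kpow Q n) p := by
  have := hnd.markovP₀; have := hnd.markovQ
  rw [← kpow_parallelComp]
  refine kpow_absolutelyContinuous (fun p => ?_) n p
  rw [hnd.apply_eq_withDensity]
  exact withDensity_absolutelyContinuous _ _

lemma parallelComp_absolutelyContinuous_kpow (hnd : Nondeg P P₀ Q g) (n : ℕ) (p : E × F) :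
    (kpow P₀ n ∥ₖ kpow Q n) p ≪ kpow P n p := by
  have := hnd.markovP₀; have := hnd.markovQ
  rw [← kpow_parallelComp]
  refine kpow_absolutelyContinuous (fun p => ?_) n p
  rw [hnd.apply_eq_withDensity]
  exact withDensity_absolutelyContinuous'
    (hnd.meas.comp (measurable_const.prodMk measurable_id)).aemeasurable
    (ae_of_all _ fun q => (hnd.pos _ _ _ _).ne')

lemma kpow_apply_prod_eq_zero_iff (hnd : Nondeg P P₀ Q g) (n : ℕ) (p : E × F) (A : Set E)
    (B : Set F) : kpow P n p (A ×ˢ B) = 0 ↔ kpow P₀ n p.1 A = 0 ∨ kpow Q n p.2 B = 0 := by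
  have := hnd.markovP₀; have := hnd.markovQ
  rw [← mul_eq_zero, ← Kernel.parallelComp_apply_prod]
  exact ⟨fun h => hnd.parallelComp_absolutelyContinuous_kpow n p h,
    fun h => hnd.kpow_absolutelyContinuous_parallelComp n p h⟩

variable {π : Measure (E × F)}

lemma kpow_comp_map_fst_absolutelyContinuous (hnd : Nondeg P P₀ Q g) (hπ : P ∘ₘ π = π) (n : ℕ) :
    kpow P₀ n ∘ₘ π.map Prod.fst ≪ π.map Prod.fst := by
  have := hnd.markovQ
  refine Measure.AbsolutelyContinuous.mk fun A hA hπA => ?_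
  rw [Measure.map_apply measurable_fst hA, ← prod_univ] at hπA
  have hae := Measure.ae_apply_eq_zero_of_comp_apply_eq_zero (hA.prod .univ)
    ((kpow_comp_eq_self hπ n).symm ▸ hπA)
  rw [Measure.bind_apply hA (kpow P₀ n).aemeasurable,
    lintegral_map (Kernel.measurable_coe _ hA) measurable_fst]
  refine (lintegral_congr_ae ?_).trans lintegral_zero
  filter_upwards [hae] with q hq
  simpa using (hnd.kpow_apply_prod_eq_zero_iff n q A univ).mp hq

lemma kpow_comp_map_snd_absolutelyContinuous (hnd : Nondeg P P₀ Q g) (hπ : P ∘ₘ π = π) (n : ℕ) :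
    kpow Q n ∘ₘ π.map Prod.snd ≪ π.map Prod.snd := by
  have := hnd.markovP₀
  refine Measure.AbsolutelyContinuous.mk fun B hB hπB => ?_
  rw [Measure.map_apply measurable_snd hB, ← univ_prod] at hπB
  have hae := Measure.ae_apply_eq_zero_of_comp_apply_eq_zero (MeasurableSet.univ.prod hB)
    ((kpow_comp_eq_self hπ n).symm ▸ hπB)
  rw [Measure.bind_apply hB (kpow Q n).aemeasurable,
    lintegral_map (Kernel.measurable_coe _ hB) measurable_snd]
  refine (lintegral_congr_ae ?_).trans lintegral_zero
  filter_upwards [hae] with q hq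
  simpa using (hnd.kpow_apply_prod_eq_zero_iff n q univ B).mp hq

lemma kpow_comp_prod_map_absolutelyContinuous [IsFiniteMeasure π] (hnd : Nondeg P P₀ Q g)
    (hπ : P ∘ₘ π = π) (n : ℕ) :
    kpow P n ∘ₘ (π.map Prod.fst).prod (π.map Prod.snd) ≪
      (π.map Prod.fst).prod (π.map Prod.snd) := by
  have := hnd.markovP₀; have := hnd.markovQ
  refine (Measure.AbsolutelyContinuous.comp_left _
    (ae_of_all _ (hnd.kpow_absolutelyContinuous_parallelComp n))).trans ?_
  rw [Measure.parallelComp_comp_prod]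
  exact (hnd.kpow_comp_map_fst_absolutelyContinuous hπ n).prod
    (hnd.kpow_comp_map_snd_absolutelyContinuous hπ n)

lemma measure_map_snd_le [IsMarkovKernel P] (hnd : Nondeg P P₀ Q g) (hπ : P ∘ₘ π = π) (n : ℕ)
    {B : Set F} (hB : MeasurableSet B) :
    π.map Prod.snd B ≤ π.map Prod.snd {w | kpow Q n w B ≠ 0} := by
  have := hnd.markovP₀
  have hBs : MeasurableSet {w | kpow Q n w B ≠ 0} :=
    (Kernel.measurable_coe _ hB (measurableSet_singleton 0)).compl
  have hsupp : {q | kpow P n q (univ ×ˢ B) ≠ 0} = Prod.snd ⁻¹' {w | kpow Q n w B ≠ 0} := by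
    ext q
    simp [hnd.kpow_apply_prod_eq_zero_iff n q univ B]
  rw [Measure.map_apply measurable_snd hB, Measure.map_apply measurable_snd hBs, ← univ_prod,
    ← hsupp]
  exact measure_le_measure_setOf_apply_ne_zero (kpow_comp_eq_self hπ n) (MeasurableSet.univ.prod hB)

lemma ae_ae_kpow_apply_eq_zero [IsFiniteMeasure π] (hnd : Nondeg P P₀ Q g) (hπ : P ∘ₘ π = π)
    (n : ℕ) {N : Set (E × F)} (hN : MeasurableSet N)
    (hρN : (π.map Prod.fst).prod (π.map Prod.snd) N = 0) :
    ∀ᵐ w ∂(π.map Prod.snd), ∀ᵐ a ∂(π.map Prod.fst), kpow Q n w (Prod.mk a ⁻¹' N) = 0 := by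
  have := hnd.markovQ
  have h0 : (((Kernel.id : Kernel E E) ∥ₖ kpow Q n) ∘ₘ
      (π.map Prod.fst).prod (π.map Prod.snd)) N = 0 := by
    rw [← Measure.prod_comp_right]
    exact (Measure.AbsolutelyContinuous.rfl.prod
      (hnd.kpow_comp_map_snd_absolutelyContinuous hπ n)) hρN
  have hmeas : MeasurableSet {q : E × F | ((Kernel.id : Kernel E E) ∥ₖ kpow Q n) q N = 0} :=
    Kernel.measurable_coe _ hN (measurableSet_singleton 0)
  have hae := Measure.ae_apply_eq_zero_of_comp_apply_eq_zero hN h0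
  rw [Measure.ae_prod_iff_ae_ae hmeas, Measure.ae_ae_comm hmeas] at hae
  filter_upwards [hae] with w hw
  filter_upwards [hw] with a ha
  rwa [Kernel.parallelComp_apply, Kernel.id_apply, Measure.dirac_prod,
    Measure.map_apply measurable_prodMk_left hN] at ha

variable [IsFiniteMeasure π] (μ : ℕ → E → Measure E) [∀ n z, IsProbabilityMeasure (μ n z)]

lemma ae_ae_measure_section_le_tvDist (hnd : Nondeg P P₀ Q g) (hπ : P ∘ₘ π = π)
    (hμ : ∀ n z, μ n z ≪ kpow P₀ n z) (n : ℕ) {C : Set (E × F)} (hC : MeasurableSet C)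
    (hπC : π C = 0) :
    ∀ᵐ q ∂π, ∀ᵐ b ∂(kpow Q n q.2),
      (π.map Prod.fst ((·, b) ⁻¹' C)).toReal ≤ tvDist (μ n q.1) (π.map Prod.fst) := by
  have := hnd.markovP₀; have := hnd.markovQ
  filter_upwards [Measure.ae_apply_eq_zero_of_comp_apply_eq_zero hC
    ((kpow_comp_eq_self hπ n).symm ▸ hπC)] with q hq
  have hR := hnd.parallelComp_absolutelyContinuous_kpow n q hq
  rw [Kernel.parallelComp_apply, Measure.prod_apply_symm hC,
    lintegral_eq_zero_iff (measurable_measure_prodMk_right hC)] at hR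
  filter_upwards [hR] with b hb
  have := abs_sub_le_tvDist (μ n q.1) (π.map Prod.fst) (s := (·, b) ⁻¹' C)
    (measurable_prodMk_right hC)
  simpa [hμ n q.1 hb] using this

lemma prod_map_absolutelyContinuous [IsMarkovKernel P] (hnd : Nondeg P P₀ Q g)
    (hπ : P ∘ₘ π = π) (hμ : ∀ n z, μ n z ≪ kpow P₀ n z)
    (hconv : TendstoInMeasure (π.map Prod.fst) (fun n z => tvDist (μ n z) (π.map Prod.fst))
      atTop 0) :
    (π.map Prod.fst).prod (π.map Prod.snd) ≪ π := by
  set m := π.map Prod.fst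
  set ν := π.map Prod.snd
  refine Measure.AbsolutelyContinuous.mk fun C hC hπC => ?_
  set f : F → ℝ := fun b => (m ((·, b) ⁻¹' C)).toReal
  have hf : Measurable f := (measurable_measure_prodMk_right hC).ennreal_toReal
  have hlevel : ∀ ε > 0, ν {b | ε ≤ f b} = 0 := fun ε hε => by
    have hB : MeasurableSet {b | ε ≤ f b} := measurableSet_le measurable_const hf
    refine le_antisymm (ge_of_tendsto' (hconv.tendsto_measure_le (fun _ _ => tvDist_nonneg _ _)
      hε) fun n => ?_) zero_le
    set B' := {w | kpow Q n w {b | ε ≤ f b} ≠ 0}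
    have hB' : MeasurableSet B' := (Kernel.measurable_coe _ hB (measurableSet_singleton 0)).compl
    calc ν {b | ε ≤ f b} ≤ ν B' := hnd.measure_map_snd_le hπ n hB
      _ = π (Prod.snd ⁻¹' B') := Measure.map_apply measurable_snd hB'
      _ ≤ π (Prod.fst ⁻¹' {z | ε ≤ tvDist (μ n z) m}) := measure_mono_ae <| by
          filter_upwards [hnd.ae_ae_measure_section_le_tvDist μ hπ hμ n hC hπC] with q hq hqB
          obtain ⟨b, hbB, hb⟩ :=
            Measure.exists_mem_of_measure_ne_zero_of_ae hqB (ae_restrict_of_ae hq)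
          exact hbB.trans hb
      _ ≤ m {z | ε ≤ tvDist (μ n z) m} := Measure.le_map_apply measurable_fst.aemeasurable _
  have hpos : ν {b | 0 < f b} = 0 := by
    have : {b | 0 < f b} = ⋃ k : ℕ, {b | 1 / ((k : ℝ) + 1) ≤ f b} := by
      ext b
      simp only [mem_iUnion]
      exact ⟨fun hb => (exists_nat_one_div_lt (show 0 < f b from hb)).imp fun _ => le_of_lt,
        fun ⟨_, hk⟩ => show 0 < f b from Nat.one_div_pos_of_nat.trans_le hk⟩
    rw [this]
    exact measure_iUnion_null fun k => hlevel _ Nat.one_div_pos_of_nat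
  rw [Measure.prod_apply_symm hC]
  refine (lintegral_eq_zero_iff (measurable_measure_prodMk_right hC)).2 ?_
  filter_upwards [measure_eq_zero_iff_ae_notMem.mp hpos] with b hb
  simpa [f, ENNReal.toReal_pos_iff, measure_lt_top] using hb

lemma absolutelyContinuous_prod_map [IsMarkovKernel P] (hnd : Nondeg P P₀ Q g)
    (hπ : P ∘ₘ π = π) (hμ : ∀ n z, μ n z ≪ kpow P₀ n z)
    (hconv : TendstoInMeasure (π.map Prod.fst) (fun n z => tvDist (μ n z) (π.map Prod.fst))
      atTop 0) :
    π ≪ (π.map Prod.fst).prod (π.map Prod.snd) := by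
  have := hnd.markovP₀; have := hnd.markovQ
  set m := π.map Prod.fst
  set σ := π.singularPart (m.prod (π.map Prod.snd))
  rw [← Measure.singularPart_eq_zero]
  obtain ⟨M, hM, hσM, hρM⟩ := Measure.mutuallySingular_singularPart π (m.prod (π.map Prod.snd))
  have hσπ : σ ≪ π := Measure.absolutelyContinuous_of_le (Measure.singularPart_le π _)
  have htv : ∀ n, ∀ᵐ q ∂σ, 1 ≤ tvDist (μ n q.1) m := fun n => by
    have h1 : ∀ᵐ q ∂σ, kpow P n q M = 0 := by
      simpa using Measure.ae_singularPart_kernel_apply_compl_eq_zero (kpow_comp_eq_self hπ n)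
        (hnd.kpow_comp_prod_map_absolutelyContinuous hπ n) hM.compl hρM (by simpa using hσM)
    have h2 : ∀ᵐ q ∂σ, ∀ᵐ a ∂m, kpow Q n q.2 (Prod.mk a ⁻¹' Mᶜ) = 0 :=
      hσπ.ae_le (ae_of_ae_map measurable_snd.aemeasurable
        (hnd.ae_ae_kpow_apply_eq_zero hπ n hM.compl hρM))
    filter_upwards [h1, h2] with q hq1 hq2
    -- `μ n q.1` is carried by `S`, which `m` does not charge
    set S := {a | kpow Q n q.2 (Prod.mk a ⁻¹' Mᶜ) ≠ 0}
    have hS : MeasurableSet S :=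
      (measurable_measure_prodMk_left hM.compl (measurableSet_singleton 0)).compl
    have hP₀S : kpow P₀ n q.1 Sᶜ = 0 := by
      have hR := hnd.parallelComp_absolutelyContinuous_kpow n q hq1
      rw [Kernel.parallelComp_apply, Measure.measure_prod_null hM] at hR
      refine ae_iff.1 ?_
      filter_upwards [hR] with a ha
      change kpow Q n q.2 (Prod.mk a ⁻¹' Mᶜ) ≠ 0
      rw [preimage_compl, (prob_compl_eq_one_iff (measurable_prodMk_left hM)).2 ha]
      exact one_ne_zero
    have hμS : μ n q.1 S = 1 := (prob_compl_eq_zero_iff hS).1 (hμ n q.1 hP₀S)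
    have hmS : m S = 0 := ae_iff.1 hq2
    simpa [hμS, hmS] using abs_sub_le_tvDist (μ n q.1) m hS
  refine Measure.measure_univ_eq_zero.mp (le_antisymm (ge_of_tendsto'
    (hconv.tendsto_measure_le (fun _ _ => tvDist_nonneg _ _) one_pos) fun n => ?_) zero_le)
  calc σ univ ≤ σ (Prod.fst ⁻¹' {z | 1 ≤ tvDist (μ n z) m}) :=
        measure_mono_ae (by filter_upwards [htv n] with q hq _ using hq)
    _ ≤ π (Prod.fst ⁻¹' {z | 1 ≤ tvDist (μ n z) m}) := Measure.singularPart_le π _ _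
    _ ≤ m {z | 1 ≤ tvDist (μ n z) m} := Measure.le_map_apply measurable_fst.aemeasurable _

end Nondeg

section PnX

variable {E F : Type*} [MeasurableSpace E] [MeasurableSpace F] {P : Kernel (E × F) (E × F)}

lemma IsCondYgivenX.exists_isMarkovKernel {π : Measure (E × F)} {πX : E → Measure F}
    (hπX : IsCondYgivenX π πX) : ∃ κ : Kernel E F, IsMarkovKernel κ ∧ ⇑κ = πX :=
  ⟨⟨πX, Measure.measurable_of_measurable_coe _ fun B hB => (hπX.2 B hB).1⟩, ⟨hπX.1⟩, rfl⟩

lemma PnX_apply (πX : E → Measure F) (n : ℕ) (z : E) {A : Set E} (hA : MeasurableSet A) :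
    PnX P πX n z A = ∫⁻ w, kpow P n (z, w) (A ×ˢ univ) ∂(πX z) := by
  rw [PnX, Measure.map_apply measurable_fst hA, ← prod_univ]
  exact Measure.bind_apply (hA.prod .univ)
    ((kpow P n).comap (Prod.mk z) measurable_prodMk_left).aemeasurable

instance [IsMarkovKernel P] (κX : Kernel E F) [IsMarkovKernel κX] (n : ℕ) (z : E) :
    IsProbabilityMeasure (PnX P κX n z) :=
  Measure.isProbabilityMeasure_map
    (μ := (kpow P n).comap (Prod.mk z) measurable_prodMk_left ∘ₘ κX z) measurable_fst.aemeasurable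

lemma measurable_PnX_apply (κX : Kernel E F) [IsSFiniteKernel κX] (n : ℕ) {A : Set E}
    (hA : MeasurableSet A) : Measurable fun z => PnX P κX n z A := by
  simp_rw [PnX_apply _ n _ hA]
  exact ((kpow P n).measurable_coe (hA.prod .univ)).lintegral_kernel_prod_right'

lemma Nondeg.PnX_absolutelyContinuous {P₀ : Kernel E E} {Q : Kernel F F}
    {g : E → F → E → F → ℝ≥0∞} (hnd : Nondeg P P₀ Q g) (πX : E → Measure F) (n : ℕ) (z : E) :
    PnX P πX n z ≪ kpow P₀ n z := by
  refine Measure.AbsolutelyContinuous.mk fun A hA hA0 => ?_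
  rw [PnX_apply πX n z hA]
  simp [(hnd.kpow_apply_prod_eq_zero_iff n (z, _) A univ).2 (Or.inl hA0)]

end PnX

theorem invariant_measure_product_structure_general
    {E F : Type*}
    [MeasurableSpace E] [TopologicalSpace E] [PolishSpace E] [BorelSpace E]
    [MeasurableSpace F]
    (P : Kernel (E × F) (E × F)) [IsMarkovKernel P]
    (π : Measure (E × F)) [IsProbabilityMeasure π]
    (hπinv : π.bind (fun p => P p) = π)
    (P₀ : Kernel E E) (Q : Kernel F F) (g : E → F → E → F → ℝ≥0∞)
    (hnd : Nondeg P P₀ Q g)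
    (πX : E → Measure F) (hπX : IsCondYgivenX π πX)
    (herg : Tendsto (fun n : ℕ =>
        ∫ z, tvDist (PnX P πX n z) (π.map Prod.fst) ∂(π.map Prod.fst)) atTop (nhds 0)) :
    ∃ h : E × F → ℝ≥0∞, Measurable h ∧ (∀ p, 0 < h p ∧ h p < ⊤) ∧
      π = (measProd (π.map Prod.fst) (π.map Prod.snd)).withDensity h := by
  obtain ⟨κX, _, rfl⟩ := hπX.exists_isMarkovKernel
  have := Measure.isProbabilityMeasure_map (μ := π) measurable_fst.aemeasurable
  have hint : ∀ n, Integrable (fun z => tvDist (PnX P κX n z) (π.map Prod.fst)) (π.map Prod.fst) :=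
    fun n => .of_bound
      (measurable_tvDist (fun _ => measurable_PnX_apply κX n) _).aestronglyMeasurable 1
      (ae_of_all _ fun _ => by rw [Real.norm_of_nonneg (tvDist_nonneg _ _)]; exact tvDist_le_one _ _)
  have hconv : TendstoInMeasure (π.map Prod.fst)
      (fun n z => tvDist (PnX P κX n z) (π.map Prod.fst)) atTop 0 :=
    .of_tendsto_integral (fun _ => ae_of_all _ fun _ => tvDist_nonneg _ _) hint herg
  rw [measProd_eq_prod]
  exact Measure.exists_pos_lt_top_withDensity_eq
    (hnd.absolutelyContinuous_prod_map _ hπinv (hnd.PnX_absolutelyContinuous κX) hconv)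
    (hnd.prod_map_absolutelyContinuous _ hπinv (hnd.PnX_absolutelyContinuous κX) hconv)

theorem invariant_measure_product_structure
    {E F : Type*}
    [MeasurableSpace E] [TopologicalSpace E] [PolishSpace E] [BorelSpace E]
    [MeasurableSpace F] [TopologicalSpace F] [PolishSpace F] [BorelSpace F]
    (P : Kernel (E × F) (E × F)) [IsMarkovKernel P]
    (π : Measure (E × F)) [IsProbabilityMeasure π]
    (hπinv : π.bind (fun p => P p) = π)
    (P₀ : Kernel E E) (Q : Kernel F F) (g : E → F → E → F → ℝ≥0∞)
    (hnd : Nondeg P P₀ Q g)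
    (πX : E → Measure F) (hπX : IsCondYgivenX π πX)
    (πY : F → Measure E) (hπY : IsCondXgivenY π πY)
    (herg : Tendsto (fun n : ℕ =>
        ∫ z, tvDist (PnX P πX n z) (π.map Prod.fst) ∂(π.map Prod.fst)) atTop (nhds 0)) :
    ∃ h : E × F → ℝ≥0∞, Measurable h ∧ (∀ p, 0 < h p ∧ h p < ⊤) ∧
      π = (measProd (π.map Prod.fst) (π.map Prod.snd)).withDensity h :=
  invariant_measure_product_structure_general P π hπinv P₀ Q g hnd πX hπX herg
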